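/- arXiv:2010.04130 — 2 statements merged into one kernel-verified Lean document; each statement's English description precedes it below -/
import Mathlib

section
/- Let T be a hyponormal absolutely norm attaining operator on an infinite-dimensional complex Hilbert space H, let {λ} = σ_ess(|T|) with λ > 0, and let H_1 = N(|T| − λI). Then T is normal if and only if T maps H_1 onto H_1 (equivalently, the isometry S_1 in the structure representation of T is unitary). -/
noncomputable section

variable {H : Type*} [NormedAddCommGroup H] [InnerProductSpace ℂ H] [CompleteSpace H]

/-- The restriction of `T` to the subspace `M` attains its norm:
there is a unit vector `x ∈ M` with `‖T x‖ = sup {‖T y‖ : y ∈ M, ‖y‖ = 1}`. -/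
def NormAttainingOn (T : H →L[ℂ] H) (M : Submodule ℂ H) : Prop :=
  ∃ x ∈ M, ‖x‖ = 1 ∧ ‖T x‖ = sSup {r : ℝ | ∃ y ∈ M, ‖y‖ = 1 ∧ r = ‖T y‖}

/-- `T` is absolutely norm attaining (an `𝒜𝒩`-operator): its restriction to every
nonzero closed subspace attains its norm. -/
def IsANOperator (T : H →L[ℂ] H) : Prop :=
  ∀ M : Submodule ℂ H, IsClosed (M : Set H) → M ≠ ⊥ → NormAttainingOn T M

/-- The restriction of `T` to the subspace `M` attains its minimum modulus. -/
def MinAttainingOn (T : H →L[ℂ] H) (M : Submodule ℂ H) : Prop :=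
  ∃ x ∈ M, ‖x‖ = 1 ∧ ‖T x‖ = sInf {r : ℝ | ∃ y ∈ M, ‖y‖ = 1 ∧ r = ‖T y‖}

/-- `T` is absolutely minimum attaining (an `𝒜ℳ`-operator). -/
def IsAMOperator (T : H →L[ℂ] H) : Prop :=
  ∀ M : Submodule ℂ H, IsClosed (M : Set H) → M ≠ ⊥ → MinAttainingOn T M

/-- A Fredholm operator: closed range and finite dimensional kernel and co-kernel
(kernel of the adjoint). -/
def IsFredholmOp (T : H →L[ℂ] H) : Prop :=
  IsClosed (LinearMap.range (T : H →ₗ[ℂ] H) : Set H) ∧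
    FiniteDimensional ℂ (LinearMap.ker (T : H →ₗ[ℂ] H)) ∧
    FiniteDimensional ℂ (LinearMap.ker (ContinuousLinearMap.adjoint T : H →ₗ[ℂ] H))

/-- The essential spectrum: the set of `z` such that `T - z I` is not Fredholm. -/
def essSpectrum (T : H →L[ℂ] H) : Set ℂ :=
  {z : ℂ | ¬ IsFredholmOp (T - z • (1 : H →L[ℂ] H))}

/-- The Fredholm index `dim N(T) - dim N(T*)`. -/
def fredholmIndex (T : H →L[ℂ] H) : ℤ :=
  (Module.finrank ℂ (LinearMap.ker (T : H →ₗ[ℂ] H)) : ℤ) -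
    (Module.finrank ℂ (LinearMap.ker (ContinuousLinearMap.adjoint T : H →ₗ[ℂ] H)) : ℤ)

/-- The Weyl spectrum: the set of `z` such that `T - z I` is not Fredholm of index `0`. -/
def weylSpectrum (T : H →L[ℂ] H) : Set ℂ :=
  {z : ℂ | ¬ (IsFredholmOp (T - z • (1 : H →L[ℂ] H)) ∧
      fredholmIndex (T - z • (1 : H →L[ℂ] H)) = 0)}

/-- `T` is hyponormal: `T*T - TT* ≥ 0`. -/
def Hyponormal (T : H →L[ℂ] H) : Prop :=
  (ContinuousLinearMap.adjoint T * T - T * ContinuousLinearMap.adjoint T).IsPositive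

/-- `T` is paranormal: `‖T x‖² ≤ ‖T² x‖ ‖x‖` for all `x`. -/
def Paranormal (T : H →L[ℂ] H) : Prop :=
  ∀ x : H, ‖T x‖ ^ 2 ≤ ‖T (T x)‖ * ‖x‖

/-- `|T|`, the unique positive square root of `T*T`. -/
def opAbs (T : H →L[ℂ] H) : H →L[ℂ] H :=
  CFC.sqrt (ContinuousLinearMap.adjoint T * T)

/-- `π₀₀(T)`: the set of isolated eigenvalues of `T` of finite multiplicity. -/
def pi00 (T : H →L[ℂ] H) : Set ℂ :=
  {z : ℂ | z ∈ spectrum ℂ T ∧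
    (∃ U : Set ℂ, IsOpen U ∧ U ∩ spectrum ℂ T = {z}) ∧
    LinearMap.ker ((T - z • (1 : H →L[ℂ] H) : H →L[ℂ] H) : H →ₗ[ℂ] H) ≠ ⊥ ∧
    FiniteDimensional ℂ (LinearMap.ker ((T - z • (1 : H →L[ℂ] H) : H →L[ℂ] H) : H →ₗ[ℂ] H))}

/-!
A normal `T` commutes with `T*T`, so `T` and `T*` both preserve
`H₁ = N(|T| - λ) = N(T*T - λ²)`, and `x = T (λ⁻² T* x)` shows that `T` maps `H₁` onto `H₁`.

Conversely, the sum `V` of all subspaces that reduce `T` and on which `T` is normal is again such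
a subspace, and `T H₁ = H₁` makes `H₁` one of them. If `V` were not dense, `T` would attain its
norm `c` on the reducing subspace `Vᗮ` at some `x`, and then `T*T x = c² x`. If `c = 0`, then `T`
vanishes on `Vᗮ`, hence so does `T*` by hyponormality. If `c > 0`, hyponormality shows that `T`
maps `E = Vᗮ ∩ N(T*T - c²)` into itself; `c ≠ λ` since `x ∉ H₁`, so `E` is finite dimensional
because `σ_ess(|T|) = {λ}`, and `T`, injective on `E`, maps `E` onto `E`, so `E` reduces `T` and
`T` is normal on `E`. Either way `Vᗮ` contains a nonzero subspace of this kind, which is absurd.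
-/

open ContinuousLinearMap Module.End
open scoped InnerProductSpace

section

variable {E : Type*} [NormedAddCommGroup E] [InnerProductSpace ℂ E]

lemma re_inner_ofReal_smul_left (r : ℝ) (x y : E) :
    RCLike.re ⟪(r : ℂ) • x, y⟫_ℂ = r * RCLike.re ⟪x, y⟫_ℂ := by
  simp

lemma re_inner_ofReal_smul_right (r : ℝ) (x y : E) :
    RCLike.re ⟪x, (r : ℂ) • y⟫_ℂ = r * RCLike.re ⟪x, y⟫_ℂ := by
  simp

lemma ker_sub_smul_one_eq_eigenspace (A : E →L[ℂ] E) (z : ℂ) :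
    LinearMap.ker ((A - z • (1 : E →L[ℂ] E) : E →L[ℂ] E) : E →ₗ[ℂ] E) =
      eigenspace A.toLinearMap z := by
  ext x
  simp [sub_eq_zero]

lemma ContinuousLinearMap.IsPositive.eigenspace_eq_eigenspace_mul_self {A : E →L[ℂ] E}
    (hA : A.IsPositive) {c : ℝ} (hc : 0 < c) :
    eigenspace A.toLinearMap c = eigenspace (A * A).toLinearMap ((c : ℂ) ^ 2) := by
  ext x
  simp only [mem_eigenspace_iff]
  change A x = _ ↔ A (A x) = _
  refine ⟨fun h => by rw [h, map_smul, h, smul_smul, sq], fun h => ?_⟩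
  set y := A x - (c : ℂ) • x
  -- `A y = -c y` with `A ≥ 0` and `c > 0` forces `y = 0`.
  have hAy : A y = -((c : ℂ) • y) := by
    simp only [y, map_sub, map_smul, h, smul_sub, smul_smul, sq]
    abel
  have hre := hA.re_inner_nonneg_left y
  rw [hAy, inner_neg_left, map_neg, re_inner_ofReal_smul_left, inner_self_eq_norm_sq] at hre
  have hy : y = 0 := by
    by_contra hy
    linarith [mul_pos hc (pow_pos (norm_pos_iff.2 hy) 2)]
  exact sub_eq_zero.1 hy

lemma NormAttainingOn.exists_forall_norm_apply_le {T : E →L[ℂ] E} {M : Submodule ℂ E}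
    (hT : NormAttainingOn T M) : ∃ x ∈ M, ‖x‖ = 1 ∧ ∀ y ∈ M, ‖T y‖ ≤ ‖T x‖ * ‖y‖ := by
  obtain ⟨x, hxM, hx1, hsup⟩ := hT
  refine ⟨x, hxM, hx1, fun y hyM => ?_⟩
  rcases eq_or_ne y 0 with rfl | hy
  · simp
  have hbdd : BddAbove {r : ℝ | ∃ y ∈ M, ‖y‖ = 1 ∧ r = ‖T y‖} :=
    ⟨‖T‖, by rintro _ ⟨u, -, hu1, rfl⟩; simpa [hu1] using T.le_opNorm u⟩
  set u := ((‖y‖⁻¹ : ℝ) : ℂ) • y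
  have hu1 : ‖u‖ = 1 := by
    rw [norm_smul, Complex.norm_real, norm_inv, norm_norm, inv_mul_cancel₀ (norm_ne_zero_iff.2 hy)]
  have hTu : ‖T u‖ ≤ ‖T x‖ := hsup ▸ le_csSup hbdd ⟨u, M.smul_mem _ hyM, hu1, rfl⟩
  calc ‖T y‖ = ‖T u‖ * ‖y‖ := by
        rw [map_smul, norm_smul, Complex.norm_real, norm_inv, norm_norm, mul_comm,
          mul_inv_cancel_left₀ (norm_ne_zero_iff.2 hy)]
    _ ≤ ‖T x‖ * ‖y‖ := by gcongr

end

lemma finiteDimensional_ker_of_notMem_essSpectrum {A : H →L[ℂ] H} {z : ℂ}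
    (hz : z ∉ essSpectrum A) :
    FiniteDimensional ℂ (LinearMap.ker ((A - z • (1 : H →L[ℂ] H) : H →L[ℂ] H) : H →ₗ[ℂ] H)) :=
  (not_not.1 hz).2.1

lemma isPositive_opAbs (T : H →L[ℂ] H) : (opAbs T).IsPositive :=
  (nonneg_iff_isPositive _).1 (CFC.sqrt_nonneg _)

lemma opAbs_mul_self (T : H →L[ℂ] H) : opAbs T * opAbs T = adjoint T * T :=
  CFC.sqrt_mul_sqrt_self _ (by simpa [star_eq_adjoint] using star_mul_self_nonneg T)

lemma mem_eigenspace_adjoint_mul_self_iff {T : H →L[ℂ] H} {z : ℂ} {x : H} :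
    x ∈ eigenspace (adjoint T * T).toLinearMap z ↔ adjoint T (T x) = z • x :=
  mem_eigenspace_iff

lemma norm_apply_eq_of_adjoint_apply_apply_eq {T : H →L[ℂ] H} {c : ℝ} (hc : 0 ≤ c) {x : H}
    (hx : adjoint T (T x) = (c : ℂ) ^ 2 • x) : ‖T x‖ = c * ‖x‖ := by
  have h := apply_norm_sq_eq_inner_adjoint_left T x
  rw [comp_apply, hx, ← Complex.ofReal_pow, re_inner_ofReal_smul_left,
    inner_self_eq_norm_sq, ← mul_pow] at h
  exact (pow_left_inj₀ (norm_nonneg _) (by positivity) two_ne_zero).1 h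

lemma adjoint_apply_apply_eq_of_norm_apply_eq {T : H →L[ℂ] H} {c : ℝ} {x : H}
    (hx : ‖T x‖ = c * ‖x‖) (hy : ‖T (adjoint T (T x))‖ ≤ c * ‖adjoint T (T x)‖) :
    adjoint T (T x) = (c : ℂ) ^ 2 • x := by
  set y := adjoint T (T x)
  have hyx : RCLike.re ⟪y, x⟫_ℂ = c ^ 2 * ‖x‖ ^ 2 := by
    rw [adjoint_inner_left, inner_self_eq_norm_sq, hx, mul_pow]
  have hyy : ‖y‖ ^ 2 ≤ c ^ 2 * ‖x‖ * ‖y‖ := by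
    calc ‖y‖ ^ 2 = RCLike.re ⟪T x, T y⟫_ℂ := by rw [← adjoint_inner_left, inner_self_eq_norm_sq]
      _ ≤ ‖T x‖ * ‖T y‖ := re_inner_le_norm _ _
      _ ≤ c * ‖x‖ * (c * ‖y‖) := by rw [hx]; gcongr; rw [← hx]; positivity
      _ = c ^ 2 * ‖x‖ * ‖y‖ := by ring
  have hy_le : ‖y‖ ≤ c ^ 2 * ‖x‖ := by
    rcases (norm_nonneg y).eq_or_lt with h | h
    · rw [← h]; positivity
    · nlinarith
  have hdist : ‖y - (c : ℂ) ^ 2 • x‖ ^ 2 = ‖y‖ ^ 2 - (c ^ 2 * ‖x‖) ^ 2 := by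
    rw [← Complex.ofReal_pow, @norm_sub_sq ℂ, re_inner_ofReal_smul_right, hyx, norm_smul,
      Complex.norm_real, Real.norm_of_nonneg (by positivity)]
    ring
  have : ‖y - (c : ℂ) ^ 2 • x‖ ^ 2 ≤ 0 := by
    rw [hdist]; nlinarith [norm_nonneg y]
  exact sub_eq_zero.1 <| norm_eq_zero.1 <| pow_eq_zero_iff two_ne_zero |>.1 <|
    le_antisymm this (sq_nonneg _)

lemma mapsTo_orthogonal_of_mapsTo_adjoint {A : H →L[ℂ] H} {U : Submodule ℂ H}
    (h : Set.MapsTo (adjoint A) U U) : Set.MapsTo A Uᗮ Uᗮ := fun w hw =>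
  (Submodule.mem_orthogonal _ _).2 fun u hu => by
    rw [← adjoint_inner_left]; exact (Submodule.mem_orthogonal _ _).1 hw _ (h hu)

structure IsNormalReducing (T : H →L[ℂ] H) (U : Submodule ℂ H) : Prop where
  mapsTo : Set.MapsTo T U U
  mapsTo_adjoint : Set.MapsTo (adjoint T) U U
  adjoint_apply_apply : ∀ x ∈ U, adjoint T (T x) = T (adjoint T x)

namespace IsNormalReducing

variable {T : H →L[ℂ] H}

lemma mapsTo_orthogonal {U : Submodule ℂ H} (hU : IsNormalReducing T U) : Set.MapsTo T Uᗮ Uᗮ :=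
  mapsTo_orthogonal_of_mapsTo_adjoint hU.mapsTo_adjoint

lemma mapsTo_adjoint_orthogonal {U : Submodule ℂ H} (hU : IsNormalReducing T U) :
    Set.MapsTo (adjoint T) Uᗮ Uᗮ :=
  mapsTo_orthogonal_of_mapsTo_adjoint (by rw [adjoint_adjoint]; exact hU.mapsTo)

lemma of_image_eq {E : Submodule ℂ H} {z : ℂ} (hE : T '' E = E)
    (hz : ∀ x ∈ E, adjoint T (T x) = z • x) : IsNormalReducing T E := by
  have hsurj : ∀ y ∈ E, ∃ x ∈ E, T x = y := fun y hy => hE.symm.subset hy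
  have hmaps : ∀ x ∈ E, T x ∈ E := fun x hx => hE.subset (Set.mem_image_of_mem T hx)
  refine ⟨hmaps, fun y hy => ?_, fun y hy => ?_⟩
  · obtain ⟨x, hx, rfl⟩ := hsurj y hy
    rw [hz x hx]; exact E.smul_mem z hx
  · obtain ⟨x, hx, rfl⟩ := hsurj y hy
    rw [hz x hx, hz _ (hmaps x hx), map_smul]

end IsNormalReducing

lemma isNormalReducing_sSup {T : H →L[ℂ] H} {S : Set (Submodule ℂ H)}
    (hS : ∀ U ∈ S, IsNormalReducing T U) : IsNormalReducing T (sSup S) := by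
  have hmaps (A : H →L[ℂ] H) (hA : ∀ U ∈ S, Set.MapsTo A U U) :
      Set.MapsTo A (sSup S : Submodule ℂ H) (sSup S : Submodule ℂ H) := by
    have : sSup S ≤ (sSup S).comap (A : H →ₗ[ℂ] H) :=
      sSup_le fun U hU x hx => Submodule.mem_sSup_of_mem hU (hA U hU hx)
    exact fun x hx => this hx
  refine ⟨hmaps T fun U hU => (hS U hU).mapsTo, hmaps _ fun U hU => (hS U hU).mapsTo_adjoint, ?_⟩
  have : sSup S ≤ LinearMap.ker ((adjoint T * T - T * adjoint T : H →L[ℂ] H) : H →ₗ[ℂ] H) :=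
    sSup_le fun U hU x hx => by simp [(hS U hU).adjoint_apply_apply x hx]
  exact fun x hx => by simpa [sub_eq_zero] using this hx

def normalPart (T : H →L[ℂ] H) : Submodule ℂ H :=
  sSup {U | IsNormalReducing T U}

lemma isNormalReducing_normalPart (T : H →L[ℂ] H) : IsNormalReducing T (normalPart T) :=
  isNormalReducing_sSup fun _ hU => hU

lemma IsNormalReducing.le_normalPart {T : H →L[ℂ] H} {U : Submodule ℂ H}
    (hU : IsNormalReducing T U) : U ≤ normalPart T :=
  le_sSup hU

lemma adjoint_mul_self_eq_of_orthogonal_normalPart_eq_bot {T : H →L[ℂ] H}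
    (h : (normalPart T)ᗮ = ⊥) : adjoint T * T = T * adjoint T := by
  set K := LinearMap.ker ((adjoint T * T - T * adjoint T : H →L[ℂ] H) : H →ₗ[ℂ] H)
  have hK : normalPart T ≤ K := fun x hx => by
    simp [K, (isNormalReducing_normalPart T).adjoint_apply_apply x hx]
  have hKtop : K = ⊤ := top_le_iff.1 <| Submodule.topologicalClosure_eq_top_iff.2 h ▸
    Submodule.topologicalClosure_minimal _ hK (isClosed_ker _)
  ext x
  simpa [K, sub_eq_zero] using (hKtop ▸ Submodule.mem_top : x ∈ K)

namespace Hyponormal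

variable {T : H →L[ℂ] H}

lemma norm_adjoint_apply_le (hT : Hyponormal T) (x : H) : ‖adjoint T x‖ ≤ ‖T x‖ := by
  have h := hT.re_inner_nonneg_left x
  rw [sub_apply, inner_sub_left, map_sub, sub_nonneg] at h
  refine (pow_le_pow_iff_left₀ (norm_nonneg _) (norm_nonneg _) two_ne_zero).1 ?_
  rw [apply_norm_sq_eq_inner_adjoint_left, apply_norm_sq_eq_inner_adjoint_left, adjoint_adjoint]
  exact h

lemma isNormalReducing_of_forall_apply_eq_zero (hT : Hyponormal T) {W : Submodule ℂ H}
    (hW : ∀ w ∈ W, T w = 0) : IsNormalReducing T W := by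
  have hadj : ∀ w ∈ W, adjoint T w = 0 := fun w hw =>
    norm_le_zero_iff.1 ((hT.norm_adjoint_apply_le w).trans_eq (by rw [hW w hw, norm_zero]))
  refine ⟨fun w hw => ?_, fun w hw => ?_, fun w hw => ?_⟩
  · rw [SetLike.mem_coe, hW w hw]; exact W.zero_mem
  · rw [SetLike.mem_coe, hadj w hw]; exact W.zero_mem
  · rw [hW w hw, hadj w hw, map_zero, map_zero]

lemma mapsTo_inf_eigenspace (hT : Hyponormal T) {W : Submodule ℂ H} (hTW : Set.MapsTo T W W)
    (hTaW : Set.MapsTo (adjoint T) W W) {c : ℝ} (hc : 0 ≤ c) (hbound : ∀ w ∈ W, ‖T w‖ ≤ c * ‖w‖) :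
    Set.MapsTo T (W ⊓ eigenspace (adjoint T * T).toLinearMap ((c : ℂ) ^ 2) :
      Submodule ℂ H) (W ⊓ eigenspace (adjoint T * T).toLinearMap ((c : ℂ) ^ 2)) := by
  rintro v ⟨hvW, hv⟩
  rw [SetLike.mem_coe, mem_eigenspace_adjoint_mul_self_iff] at hv
  have hTvW : T v ∈ W := hTW hvW
  -- Hyponormality gives `‖T (T v)‖ ≥ ‖T* T v‖ = c ‖T v‖`, so `T v` attains the bound `c`.
  have hnorm : ‖T (T v)‖ = c * ‖T v‖ := by
    refine le_antisymm (hbound _ hTvW) ?_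
    calc c * ‖T v‖ = ‖adjoint T (T v)‖ := by
          rw [norm_apply_eq_of_adjoint_apply_apply_eq hc hv, hv, norm_smul, norm_pow,
            Complex.norm_real, Real.norm_of_nonneg hc]
          ring
      _ ≤ ‖T (T v)‖ := hT.norm_adjoint_apply_le _
  exact ⟨hTvW, mem_eigenspace_adjoint_mul_self_iff.2
    (adjoint_apply_apply_eq_of_norm_apply_eq hnorm (hbound _ (hTaW (hTW hTvW))))⟩

lemma exists_isNormalReducing_le (hT : Hyponormal T) {W : Submodule ℂ H}
    (hTW : Set.MapsTo T W W) (hTaW : Set.MapsTo (adjoint T) W W) (hW : NormAttainingOn T W)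
    (hfin : ∀ c : ℝ, 0 < c → FiniteDimensional ℂ
      ↥(W ⊓ eigenspace (adjoint T * T).toLinearMap ((c : ℂ) ^ 2))) :
    ∃ E ≤ W, E ≠ ⊥ ∧ IsNormalReducing T E := by
  obtain ⟨x, hxW, hx1, hbound⟩ := hW.exists_forall_norm_apply_le
  have hx0 : x ≠ 0 := norm_ne_zero_iff.1 (hx1 ▸ one_ne_zero)
  rcases (norm_nonneg (T x)).eq_or_lt with hc | hc
  · refine ⟨W, le_rfl, (Submodule.ne_bot_iff W).2 ⟨x, hxW, hx0⟩,
      hT.isNormalReducing_of_forall_apply_eq_zero fun w hw => norm_le_zero_iff.1 ?_⟩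
    exact (hbound w hw).trans_eq (by rw [← hc, zero_mul])
  set c := ‖T x‖
  set E := W ⊓ eigenspace (adjoint T * T).toLinearMap ((c : ℂ) ^ 2)
  have := hfin c hc
  have hxE : x ∈ E := ⟨hxW, mem_eigenspace_adjoint_mul_self_iff.2 <|
    adjoint_apply_apply_eq_of_norm_apply_eq (by rw [hx1, mul_one]) (hbound _ (hTaW (hTW hxW)))⟩
  have hmaps : Set.MapsTo T E E := hT.mapsTo_inf_eigenspace hTW hTaW hc.le hbound
  have hinj : Set.InjOn T E := fun a ha b hb hab => by
    have h := norm_apply_eq_of_adjoint_apply_apply_eq hc.le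
      (mem_eigenspace_adjoint_mul_self_iff.1 (E.sub_mem ha hb).2)
    rw [map_sub, hab, sub_self, norm_zero, zero_eq_mul] at h
    exact sub_eq_zero.1 (norm_eq_zero.1 (h.resolve_left hc.ne'))
  have himage : T '' E = E :=
    ((LinearMap.injOn_iff_surjOn (f := (T : H →ₗ[ℂ] H)) hmaps).1 hinj).image_eq_of_mapsTo hmaps
  exact ⟨E, inf_le_left, (Submodule.ne_bot_iff E).2 ⟨x, hxE, hx0⟩,
    IsNormalReducing.of_image_eq himage fun v hv => mem_eigenspace_adjoint_mul_self_iff.1 hv.2⟩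

theorem adjoint_mul_self_eq_of_isANOperator (hT : Hyponormal T) (hAN : IsANOperator T)
    {lam : ℝ}
    (hlam : IsNormalReducing T (eigenspace (adjoint T * T).toLinearMap ((lam : ℂ) ^ 2)))
    (hfin : ∀ c : ℝ, 0 < c → c ≠ lam → FiniteDimensional ℂ
      (eigenspace (adjoint T * T).toLinearMap ((c : ℂ) ^ 2))) :
    adjoint T * T = T * adjoint T := by
  refine adjoint_mul_self_eq_of_orthogonal_normalPart_eq_bot (by_contra fun hW => ?_)
  set V := normalPart T
  have hV : IsNormalReducing T V := isNormalReducing_normalPart T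
  have hfinW : ∀ c : ℝ, 0 < c → FiniteDimensional ℂ
      ↥(Vᗮ ⊓ eigenspace (adjoint T * T).toLinearMap ((c : ℂ) ^ 2)) := by
    intro c hc
    rcases eq_or_ne c lam with rfl | hne
    · rw [inf_comm, disjoint_iff.1 ((Submodule.orthogonal_disjoint V).mono_left hlam.le_normalPart)]
      infer_instance
    · have := hfin c hc hne
      exact Submodule.finiteDimensional_of_le inf_le_right
  obtain ⟨E, hEW, hE, hEN⟩ := hT.exists_isNormalReducing_le hV.mapsTo_orthogonal
    hV.mapsTo_adjoint_orthogonal (hAN _ (Submodule.isClosed_orthogonal V) hW) hfinW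
  exact hE (disjoint_self.1 ((Submodule.orthogonal_disjoint V).mono hEN.le_normalPart hEW))

end Hyponormal

lemma image_eigenspace_adjoint_mul_self_eq {T : H →L[ℂ] H} (hT : adjoint T * T = T * adjoint T)
    {z : ℂ} (hz : z ≠ 0) :
    T '' eigenspace (adjoint T * T).toLinearMap z =
      eigenspace (adjoint T * T).toLinearMap z := by
  have hcomm (x : H) : adjoint T (T x) = T (adjoint T x) := DFunLike.congr_fun hT x
  refine subset_antisymm ?_ fun x hx => ?_
  · rintro _ ⟨x, hx, rfl⟩
    rw [SetLike.mem_coe, mem_eigenspace_adjoint_mul_self_iff] at hx ⊢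
    rw [hcomm, hx, map_smul]
  · rw [SetLike.mem_coe, mem_eigenspace_adjoint_mul_self_iff] at hx
    refine ⟨z⁻¹ • adjoint T x, ?_, ?_⟩
    · rw [SetLike.mem_coe, mem_eigenspace_adjoint_mul_self_iff, map_smul, map_smul, ← hcomm, hx,
        map_smul, smul_comm]
    · rw [map_smul, ← hcomm, hx, smul_smul, inv_mul_cancel₀ hz, one_smul]

theorem hyponormal_AN_normal_iff_maps_onto'_general
    (T : H →L[ℂ] H) (hhypo : Hyponormal T) (hAN : IsANOperator T)
    (lam : ℝ) (hlam : 0 < lam)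
    (hess : essSpectrum (opAbs T) = {(lam : ℂ)})
    (H₁ : Submodule ℂ H)
    (hH₁ : H₁ = LinearMap.ker ((opAbs T - (lam : ℂ) • (1 : H →L[ℂ] H) : H →L[ℂ] H) : H →ₗ[ℂ] H)) :
    (ContinuousLinearMap.adjoint T * T = T * ContinuousLinearMap.adjoint T) ↔
      T '' (H₁ : Set H) = (H₁ : Set H) := by
  have heig {c : ℝ} (hc : 0 < c) :
      LinearMap.ker ((opAbs T - (c : ℂ) • (1 : H →L[ℂ] H) : H →L[ℂ] H) : H →ₗ[ℂ] H) =
        eigenspace (adjoint T * T).toLinearMap ((c : ℂ) ^ 2) := by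
    rw [ker_sub_smul_one_eq_eigenspace, (isPositive_opAbs T).eigenspace_eq_eigenspace_mul_self hc,
      opAbs_mul_self]
  rw [heig hlam] at hH₁
  subst hH₁
  refine ⟨fun hT => image_eigenspace_adjoint_mul_self_eq hT
    (pow_ne_zero 2 (Complex.ofReal_ne_zero.2 hlam.ne')), fun himage => ?_⟩
  refine hhypo.adjoint_mul_self_eq_of_isANOperator hAN
    (IsNormalReducing.of_image_eq himage fun x hx => mem_eigenspace_adjoint_mul_self_iff.1 hx)
    fun c hc hne => ?_
  rw [← heig hc]
  exact finiteDimensional_ker_of_notMem_essSpectrum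
    (by rw [hess, Set.mem_singleton_iff]; exact_mod_cast hne)

/-- A hyponormal `𝒜𝒩`-operator on an infinite-dimensional complex Hilbert space with
`σ_ess(|T|) = {λ}`, `λ > 0`, is normal iff it maps `H₁ = N(|T| - λI)` onto `H₁`. -/
theorem hyponormal_AN_normal_iff_maps_onto' (hH : ¬ FiniteDimensional ℂ H)
    (T : H →L[ℂ] H) (hhypo : Hyponormal T) (hAN : IsANOperator T)
    (lam : ℝ) (hlam : 0 < lam)
    (hess : essSpectrum (opAbs T) = {(lam : ℂ)})
    (H₁ : Submodule ℂ H)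
    (hH₁ : H₁ = LinearMap.ker ((opAbs T - (lam : ℂ) • (1 : H →L[ℂ] H) : H →L[ℂ] H) : H →ₗ[ℂ] H)) :
    (ContinuousLinearMap.adjoint T * T = T * ContinuousLinearMap.adjoint T) ↔
      T '' (H₁ : Set H) = (H₁ : Set H) :=
  hyponormal_AN_normal_iff_maps_onto'_general T hhypo hAN lam hlam hess H₁ hH₁
end
end

section
/- Let T be an absolutely norm attaining operator on a complex Hilbert space H such that both T and T* are paranormal. Then T is normal. -/
/-! Subspaces that reduce `T` and on which `T` is normal are closed under arbitrary suprema, so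
there is a largest one, `W`, and it suffices to show `Wᗮ = ⊥`. Otherwise `T` attains its norm `β`
on the reducing subspace `Wᗮ` at a unit vector `x`. On `Wᗮ`, a vector `z` with `‖T z‖ = β ‖z‖`
satisfies `T* T z = β² z` (equality in Cauchy–Schwarz, as `‖T*‖ ≤ β` there as well), and
paranormality passes the equality `‖T z‖ = β ‖z‖` on from `z` to `T z`; the same holds for `T*`.
Hence `{z ∈ Wᗮ | T* T z = T T* z = β² z}` reduces `T`, `T` is normal on it, and it contains `x`
(if `β = 0`) or `T x ≠ 0`, contradicting the maximality of `W`. -/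

open ContinuousLinearMap Submodule
open scoped InnerProductSpace

variable {H : Type*} [NormedAddCommGroup H] [InnerProductSpace ℂ H]

theorem eq_smul_of_norm_le_of_re_inner_eq {a z : H} {c : ℝ} (ha : ‖a‖ ≤ c * ‖z‖)
    (hinner : RCLike.re ⟪a, z⟫_ℂ = c * ‖z‖ ^ 2) : a = (c : ℂ) • z := by
  have hc : 0 ≤ c * ‖z‖ := (norm_nonneg a).trans ha
  have hsq : ‖a - (c : ℂ) • z‖ ^ 2 ≤ 0 := by
    rw [norm_sub_sq (𝕜 := ℂ), inner_smul_right, RCLike.re_to_complex, Complex.re_ofReal_mul,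
      ← RCLike.re_to_complex, hinner, norm_smul, Complex.norm_real, Real.norm_eq_abs]
    nlinarith [norm_nonneg a, norm_nonneg z, abs_mul_abs_self c, abs_nonneg c]
  exact sub_eq_zero.1 <| norm_le_zero_iff.1 <|
    (pow_eq_zero_iff two_ne_zero).1 (le_antisymm hsq (sq_nonneg _)) |>.le

theorem NormAttainingOn.exists_norm_apply_le {T : H →L[ℂ] H} {M : Submodule ℂ H}
    (h : NormAttainingOn T M) : ∃ x ∈ M, ‖x‖ = 1 ∧ ∀ z ∈ M, ‖T z‖ ≤ ‖T x‖ * ‖z‖ := by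
  obtain ⟨x, hxM, hx1, hsup⟩ := h
  refine ⟨x, hxM, hx1, fun z hzM => ?_⟩
  rcases eq_or_ne z 0 with rfl | hz0
  · simp
  have hz : 0 < ‖z‖ := norm_pos_iff.2 hz0
  have hbdd : BddAbove {r : ℝ | ∃ y ∈ M, ‖y‖ = 1 ∧ r = ‖T y‖} :=
    ⟨‖T‖, by rintro _ ⟨y, -, hy1, rfl⟩; simpa [hy1] using T.le_opNorm y⟩
  have hunit : ‖(‖z‖⁻¹ : ℂ) • z‖ = 1 := by simp [norm_smul, hz.ne']
  have hle : ‖T ((‖z‖⁻¹ : ℂ) • z)‖ ≤ ‖T x‖ :=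
    hsup ▸ le_csSup hbdd ⟨_, M.smul_mem _ hzM, hunit, rfl⟩
  rw [map_smul, norm_smul, norm_inv, Complex.norm_real, norm_norm, inv_mul_le_iff₀ hz] at hle
  linarith

theorem Paranormal.norm_apply_apply_eq {S : H →L[ℂ] H} (hS : Paranormal S) {β : ℝ} {z : H}
    (hz : ‖S z‖ = β * ‖z‖) (hle : ‖S (S z)‖ ≤ β * ‖S z‖) : ‖S (S z)‖ = β * ‖S z‖ := by
  rcases eq_or_ne z 0 with rfl | hz0
  · simp
  refine le_antisymm hle (le_of_mul_le_mul_right ?_ (norm_pos_iff.2 hz0))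
  calc β * ‖S z‖ * ‖z‖ = ‖S z‖ ^ 2 := by rw [hz]; ring
    _ ≤ ‖S (S z)‖ * ‖z‖ := hS z

variable [CompleteSpace H]

theorem Set.MapsTo.adjoint_orthogonal {S : H →L[ℂ] H} {W : Submodule ℂ H}
    (h : Set.MapsTo S W W) : Set.MapsTo (adjoint S) Wᗮ Wᗮ := by
  intro z hz
  rw [SetLike.mem_coe, mem_orthogonal]
  intro u hu
  rw [adjoint_inner_right]
  exact hz _ (h hu)

section Adjoint

variable {S : H →L[ℂ] H} {V : Submodule ℂ H} {β : ℝ}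

theorem norm_adjoint_apply_le (hV : Set.MapsTo (adjoint S) V V) (hb : ∀ z ∈ V, ‖S z‖ ≤ β * ‖z‖) :
    ∀ z ∈ V, ‖adjoint S z‖ ≤ β * ‖z‖ := by
  intro z hz
  have hβz : 0 ≤ β * ‖z‖ := (norm_nonneg _).trans (hb z hz)
  have hsq : ‖adjoint S z‖ ^ 2 ≤ ‖adjoint S z‖ * (β * ‖z‖) :=
    calc ‖adjoint S z‖ ^ 2 = RCLike.re ⟪z, S (adjoint S z)⟫_ℂ := by
          rw [apply_norm_sq_eq_inner_adjoint_right, adjoint_adjoint]; rfl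
      _ ≤ ‖z‖ * ‖S (adjoint S z)‖ := re_inner_le_norm _ _
      _ ≤ ‖z‖ * (β * ‖adjoint S z‖) := by gcongr; exact hb _ (hV hz)
      _ = ‖adjoint S z‖ * (β * ‖z‖) := by ring
  nlinarith [norm_nonneg (adjoint S z)]

theorem adjoint_apply_apply_eq_of_norm_eq {z : H} (hz : ‖S z‖ = β * ‖z‖)
    (hle : ‖adjoint S (S z)‖ ≤ β * ‖S z‖) : adjoint S (S z) = ((β ^ 2 : ℝ) : ℂ) • z := by
  refine eq_smul_of_norm_le_of_re_inner_eq (c := β ^ 2) (by rw [hz] at hle; linarith) ?_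
  rw [adjoint_inner_left, inner_self_eq_norm_sq, hz]
  ring

theorem norm_apply_eq_of_adjoint_apply_apply_eq_s14 (hβ : 0 ≤ β) {z : H}
    (h : adjoint S (S z) = ((β ^ 2 : ℝ) : ℂ) • z) : ‖S z‖ = β * ‖z‖ := by
  have hsq : ‖S z‖ ^ 2 = (β * ‖z‖) ^ 2 := by
    rw [apply_norm_sq_eq_inner_adjoint_left, comp_apply, h, inner_smul_left, Complex.conj_ofReal,
      RCLike.re_to_complex, Complex.re_ofReal_mul, ← RCLike.re_to_complex, inner_self_eq_norm_sq]
    ring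
  exact (pow_left_inj₀ (norm_nonneg _) (by positivity) two_ne_zero).1 hsq

end Adjoint

noncomputable def jointEigenspace (S : H →L[ℂ] H) (V : Submodule ℂ H) (β : ℝ) : Submodule ℂ H :=
  V ⊓ Module.End.eigenspace (adjoint S * S : H →L[ℂ] H) ((β ^ 2 : ℝ) : ℂ) ⊓
    Module.End.eigenspace (S * adjoint S : H →L[ℂ] H) ((β ^ 2 : ℝ) : ℂ)

theorem mem_jointEigenspace {S : H →L[ℂ] H} {V : Submodule ℂ H} {β : ℝ} {z : H} :
    z ∈ jointEigenspace S V β ↔ z ∈ V ∧ adjoint S (S z) = ((β ^ 2 : ℝ) : ℂ) • z ∧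
      S (adjoint S z) = ((β ^ 2 : ℝ) : ℂ) • z := by
  simp [jointEigenspace, and_assoc]

theorem jointEigenspace_adjoint (S : H →L[ℂ] H) (V : Submodule ℂ H) (β : ℝ) :
    jointEigenspace (adjoint S) V β = jointEigenspace S V β := by
  ext z
  simp only [mem_jointEigenspace, adjoint_adjoint]
  tauto

section JointEigenspace

variable {S : H →L[ℂ] H} {V : Submodule ℂ H} {β : ℝ}

theorem apply_mem_jointEigenspace (hS : Paranormal S) (hSV : Set.MapsTo S V V)
    (hb : ∀ z ∈ V, ‖S z‖ ≤ β * ‖z‖) (hb' : ∀ z ∈ V, ‖adjoint S z‖ ≤ β * ‖z‖) {z : H}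
    (hz : z ∈ V) (hzβ : ‖S z‖ = β * ‖z‖) : S z ∈ jointEigenspace S V β := by
  have hSz : S z ∈ V := hSV hz
  have hSSz : ‖S (S z)‖ = β * ‖S z‖ := hS.norm_apply_apply_eq hzβ (hb _ hSz)
  have hz_eig := adjoint_apply_apply_eq_of_norm_eq hzβ (hb' _ hSz)
  refine mem_jointEigenspace.2 ⟨hSz, ?_, by rw [hz_eig, map_smul]⟩
  exact adjoint_apply_apply_eq_of_norm_eq hSSz (hb' _ (hSV hSz))

theorem mapsTo_jointEigenspace (hβ : 0 ≤ β) (hS : Paranormal S) (hSV : Set.MapsTo S V V)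
    (hb : ∀ z ∈ V, ‖S z‖ ≤ β * ‖z‖) (hb' : ∀ z ∈ V, ‖adjoint S z‖ ≤ β * ‖z‖) :
    Set.MapsTo S (jointEigenspace S V β) (jointEigenspace S V β) := by
  intro z hz
  obtain ⟨hzV, hz_eig, -⟩ := mem_jointEigenspace.1 hz
  exact apply_mem_jointEigenspace hS hSV hb hb' hzV
    (norm_apply_eq_of_adjoint_apply_apply_eq_s14 hβ hz_eig)

theorem jointEigenspace_ne_bot (hS : Paranormal S) (hSV : Set.MapsTo S V V)
    (hb : ∀ z ∈ V, ‖S z‖ ≤ β * ‖z‖) (hb' : ∀ z ∈ V, ‖adjoint S z‖ ≤ β * ‖z‖) {x : H}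
    (hxV : x ∈ V) (hx : x ≠ 0) (hxβ : ‖S x‖ = β * ‖x‖) : jointEigenspace S V β ≠ ⊥ := by
  rw [Submodule.ne_bot_iff]
  rcases eq_or_ne β 0 with rfl | hβ
  · have hSx : S x = 0 := norm_eq_zero.1 (by simpa using hxβ)
    have hS'x : adjoint S x = 0 := norm_le_zero_iff.1 (by simpa using hb' x hxV)
    exact ⟨x, mem_jointEigenspace.2 ⟨hxV, by simp [hSx], by simp [hS'x]⟩, hx⟩
  · refine ⟨S x, apply_mem_jointEigenspace hS hSV hb hb' hxV hxβ, fun h => ?_⟩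
    rw [h, norm_zero, eq_comm, mul_eq_zero, norm_eq_zero] at hxβ
    exact hxβ.elim hβ hx

end JointEigenspace

structure IsNormalReducing_s14 (T : H →L[ℂ] H) (W : Submodule ℂ H) : Prop where
  mapsTo : Set.MapsTo T W W
  mapsTo_adjoint : Set.MapsTo (adjoint T) W W
  le_ker : W ≤ (adjoint T * T - T * adjoint T).ker

theorem isNormalReducing_sSup_s14 {T : H →L[ℂ] H} {s : Set (Submodule ℂ H)}
    (hs : ∀ W ∈ s, IsNormalReducing_s14 T W) : IsNormalReducing_s14 T (sSup s) where
  mapsTo := show sSup s ≤ (sSup s).comap (T : H →ₗ[ℂ] H) from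
    sSup_le fun W hW _ hz => le_sSup hW ((hs W hW).mapsTo hz)
  mapsTo_adjoint := show sSup s ≤ (sSup s).comap (adjoint T : H →ₗ[ℂ] H) from
    sSup_le fun W hW _ hz => le_sSup hW ((hs W hW).mapsTo_adjoint hz)
  le_ker := sSup_le fun W hW => (hs W hW).le_ker

theorem IsNormalReducing_s14.adjoint_mul_self_eq {T : H →L[ℂ] H} {W : Submodule ℂ H}
    (h : IsNormalReducing_s14 T W)
    (hW : W.topologicalClosure = ⊤) : adjoint T * T = T * adjoint T := by
  have hker : W.topologicalClosure ≤ (adjoint T * T - T * adjoint T).ker :=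
    topologicalClosure_minimal _ h.le_ker (isClosed_ker _)
  rw [hW, top_le_iff, LinearMap.ker_eq_top] at hker
  exact sub_eq_zero.1 (ContinuousLinearMap.coe_injective hker)

theorem isNormalReducing_jointEigenspace {T : H →L[ℂ] H} {V : Submodule ℂ H} {β : ℝ}
    (hβ : 0 ≤ β) (hT : Paranormal T) (hT' : Paranormal (adjoint T))
    (hTV : Set.MapsTo T V V) (hT'V : Set.MapsTo (adjoint T) V V)
    (hb : ∀ z ∈ V, ‖T z‖ ≤ β * ‖z‖) (hb' : ∀ z ∈ V, ‖adjoint T z‖ ≤ β * ‖z‖) :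
    IsNormalReducing_s14 T (jointEigenspace T V β) where
  mapsTo := mapsTo_jointEigenspace hβ hT hTV hb hb'
  mapsTo_adjoint := by
    rw [← jointEigenspace_adjoint]
    exact mapsTo_jointEigenspace hβ hT' hT'V hb' (by rwa [adjoint_adjoint])
  le_ker z hz := by
    obtain ⟨-, h₁, h₂⟩ := mem_jointEigenspace.1 hz
    simp [h₁, h₂]

theorem IsANOperator.exists_isNormalReducing_le {T : H →L[ℂ] H} (hAN : IsANOperator T)
    (hT : Paranormal T) (hT' : Paranormal (adjoint T)) {V : Submodule ℂ H}
    (hVc : IsClosed (V : Set H)) (hV : V ≠ ⊥) (hTV : Set.MapsTo T V V)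
    (hT'V : Set.MapsTo (adjoint T) V V) : ∃ N ≤ V, N ≠ ⊥ ∧ IsNormalReducing_s14 T N := by
  obtain ⟨x, hxV, hx1, hb⟩ := (hAN V hVc hV).exists_norm_apply_le
  have hb' := norm_adjoint_apply_le hT'V hb
  refine ⟨jointEigenspace T V ‖T x‖, inf_le_left.trans inf_le_left, ?_,
    isNormalReducing_jointEigenspace (norm_nonneg _) hT hT' hTV hT'V hb hb'⟩
  exact jointEigenspace_ne_bot hT hTV hb hb' hxV (norm_ne_zero_iff.1 (by simp [hx1]))
    (by rw [hx1, mul_one])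

/-- If `T` is an `𝒜𝒩`-operator and both `T` and `T*` are paranormal, then `T` is normal. -/
theorem paranormal_AN_normal (T : H →L[ℂ] H) (hAN : IsANOperator T)
    (hpara : Paranormal T) (hpara' : Paranormal (ContinuousLinearMap.adjoint T)) :
    ContinuousLinearMap.adjoint T * T = T * ContinuousLinearMap.adjoint T := by
  set W := sSup {W : Submodule ℂ H | IsNormalReducing_s14 T W}
  have hW : IsNormalReducing_s14 T W := isNormalReducing_sSup_s14 fun _ h => h
  have hWperp : Wᗮ = ⊥ := by
    by_contra hne
    obtain ⟨N, hNW, hN, hNT⟩ := hAN.exists_isNormalReducing_le hpara hpara'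
      (isClosed_orthogonal W) hne (by simpa using hW.mapsTo_adjoint.adjoint_orthogonal)
      hW.mapsTo.adjoint_orthogonal
    exact hN (le_bot_iff.1 (orthogonal_disjoint W (le_sSup hNT) hNW))
  refine hW.adjoint_mul_self_eq ?_
  rw [← orthogonal_orthogonal_eq_closure, hWperp, bot_orthogonal_eq_top]
end
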